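/- arXiv:1701.03888 — 3 statements merged into one kernel-verified Lean document; each statement's English description precedes it below -/
import Mathlib

section
/- For every natural number N and all real numbers x and Δ, one has the factorization P̃^{(N+1,1/2)}_{N+1}(x) = ((N+1)x + Δ²)·P^{(N,1/2)}_N(x). -/
/-- The constraint polynomials `P^{(N,ε)}_k(x)` of the asymmetric quantum Rabi model,
defined by the recursion `P₀ = 1`, `P₁ = x + Δ² − 1 − 2ε`,
`P_k = (k x + Δ² − k² − 2kε) P_{k−1} − k(k−1)(N−k+1) x P_{k−2}`. -/
noncomputable def constraintP (N : ℕ) (ε Δ x : ℝ) : ℕ → ℝ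
  | 0 => 1
  | 1 => x + Δ ^ 2 - 1 - 2 * ε
  | (k + 2) =>
      (((k : ℝ) + 2) * x + Δ ^ 2 - ((k : ℝ) + 2) ^ 2 - 2 * ((k : ℝ) + 2) * ε) *
          constraintP N ε Δ x (k + 1) -
        ((k : ℝ) + 2) * ((k : ℝ) + 1) * ((N : ℝ) - ((k : ℝ) + 2) + 1) * x *
          constraintP N ε Δ x k

/-- The companion constraint polynomials `P̃^{(N,ε)}_k(x)`, i.e. the same recursion with
`ε` replaced by `−ε`. -/
noncomputable def constraintPt (N : ℕ) (ε Δ x : ℝ) : ℕ → ℝ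
  | 0 => 1
  | 1 => x + Δ ^ 2 - 1 + 2 * ε
  | (k + 2) =>
      (((k : ℝ) + 2) * x + Δ ^ 2 - ((k : ℝ) + 2) ^ 2 + 2 * ((k : ℝ) + 2) * ε) *
          constraintPt N ε Δ x (k + 1) -
        ((k : ℝ) + 2) * ((k : ℝ) + 1) * ((N : ℝ) - ((k : ℝ) + 2) + 1) * x *
          constraintPt N ε Δ x k


/-!
At `ε = 1/2` the companion recursion for `N + 1` is intertwined with the recursion for `N`:
`P̃^{(N+1)}_k = (k x + Δ²) P^{(N)}_{k-1} - k(k-1)(N-k+1) x P^{(N)}_{k-2}` for `k ≥ 2`, by a two-step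
induction on `k` unfolding both recursions. At `k = N + 1` the factor `N - k + 1` vanishes,
which leaves the factorization.
-/

lemma constraintP_add_two (N : ℕ) (ε Δ x : ℝ) (k : ℕ) :
    constraintP N ε Δ x (k + 2) =
      (((k : ℝ) + 2) * x + Δ ^ 2 - ((k : ℝ) + 2) ^ 2 - 2 * ((k : ℝ) + 2) * ε) *
          constraintP N ε Δ x (k + 1) -
        ((k : ℝ) + 2) * ((k : ℝ) + 1) * ((N : ℝ) - ((k : ℝ) + 2) + 1) * x *
          constraintP N ε Δ x k := rfl

lemma constraintPt_add_two (N : ℕ) (ε Δ x : ℝ) (k : ℕ) :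
    constraintPt N ε Δ x (k + 2) =
      (((k : ℝ) + 2) * x + Δ ^ 2 - ((k : ℝ) + 2) ^ 2 + 2 * ((k : ℝ) + 2) * ε) *
          constraintPt N ε Δ x (k + 1) -
        ((k : ℝ) + 2) * ((k : ℝ) + 1) * ((N : ℝ) - ((k : ℝ) + 2) + 1) * x *
          constraintPt N ε Δ x k := rfl

lemma constraintPt_succ_half_add_two (N : ℕ) (Δ x : ℝ) (k : ℕ) :
    constraintPt (N + 1) (1 / 2) Δ x (k + 2) =
      (((k : ℝ) + 2) * x + Δ ^ 2) * constraintP N (1 / 2) Δ x (k + 1) -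
        ((k : ℝ) + 2) * ((k : ℝ) + 1) * ((N : ℝ) - ((k : ℝ) + 1)) * x *
          constraintP N (1 / 2) Δ x k := by
  induction k using Nat.twoStepInduction with
  | zero | one =>
    simp only [constraintPt, constraintP]
    push_cast
    ring
  | more k ih₀ ih₁ =>
    rw [constraintPt_add_two, ih₁, ih₀, constraintP_add_two N _ _ _ (k + 1),
      constraintP_add_two N _ _ _ k]
    push_cast
    ring

/-- Factorization: `P̃^{(N+1,1/2)}_{N+1}(x) = ((N+1)x + Δ²)·P^{(N,1/2)}_N(x)`. -/
theorem constraintPt_factorization (N : ℕ) (x Δ : ℝ) :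
    constraintPt (N + 1) (1 / 2) Δ x (N + 1) =
      (((N : ℝ) + 1) * x + Δ ^ 2) * constraintP N (1 / 2) Δ x N := by
  cases N with
  | zero =>
    simp only [constraintPt, constraintP]
    norm_num
  | succ n =>
    rw [constraintPt_succ_half_add_two]
    push_cast
    ring
end

section
/- For every N ∈ ℕ, every k with 0 ≤ k ≤ N, and all real x, Δ, ε, the determinant of the tridiagonal matrix M̃^{(N,ε)}_k(x,Δ) equals (−1)^{k+1}·Δ²·P̃^{(N,ε)}_k(x). -/
/-- The `(k+1)×(k+1)` tridiagonal matrix `M̃^{(N,ε)}_k(x,Δ)`: diagonal entries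
`i² − i·x − 2εi − Δ²`, superdiagonal entries `M̃[i][i+1] = i·x` (so the `(0,1)` entry is `0`),
subdiagonal entries `M̃[i+1][i] = (i+1)·(N−i)`, all other entries `0`. -/
noncomputable def tridiagMt (N k : ℕ) (ε Δ x : ℝ) : Matrix (Fin (k + 1)) (Fin (k + 1)) ℝ :=
  Matrix.of fun i j =>
    if (i : ℕ) = (j : ℕ) then (i : ℝ) ^ 2 - (i : ℝ) * x - 2 * ε * (i : ℝ) - Δ ^ 2
    else if (j : ℕ) = (i : ℕ) + 1 then (i : ℝ) * x
    else if (i : ℕ) = (j : ℕ) + 1 then ((j : ℝ) + 1) * ((N : ℝ) - (j : ℝ))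
    else 0

/-! Expanding `det M̃_k` along its last row gives the three-term recursion of the continuant of
its diagonals, which is the recursion of `(-1)^{k+1} Δ² P̃_k`; the two sequences agree at
`k = 0, 1` because the `(0,1)` entry of `M̃` vanishes. -/

namespace Matrix

variable {R : Type*} [CommRing R]

theorem det_succ_of_col_last_eq_zero {n : ℕ} (A : Matrix (Fin (n + 1)) (Fin (n + 1)) R)
    (h : ∀ i : Fin n, A i.castSucc (Fin.last n) = 0) :
    A.det = A (Fin.last n) (Fin.last n) * (A.submatrix Fin.castSucc Fin.castSucc).det := by
  rw [det_succ_column A (Fin.last n), Fin.sum_univ_castSucc,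
    Finset.sum_eq_zero fun i _ => by rw [h i, mul_zero, zero_mul], zero_add,
    Fin.succAbove_last, Fin.val_last, Even.neg_one_pow ⟨n, rfl⟩, one_mul]

def tridiagonal (a b c : ℕ → R) (n : ℕ) : Matrix (Fin n) (Fin n) R :=
  of fun i j =>
    if (i : ℕ) = j then a i
    else if (j : ℕ) = i + 1 then b i
    else if (i : ℕ) = j + 1 then c j
    else 0

def continuant (a b c : ℕ → R) : ℕ → R
  | 0 => 1
  | 1 => a 0
  | n + 2 => a (n + 1) * continuant a b c (n + 1) - b n * c n * continuant a b c n

variable (a b c : ℕ → R)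

@[simp]
theorem tridiagonal_submatrix_castSucc (n : ℕ) :
    (tridiagonal a b c (n + 1)).submatrix Fin.castSucc Fin.castSucc = tridiagonal a b c n := by
  ext i j
  simp [tridiagonal]

theorem tridiagonal_apply_self {n : ℕ} (i : Fin n) : tridiagonal a b c n i i = a i := by
  simp [tridiagonal]

theorem tridiagonal_apply_superdiag {n : ℕ} {i j : Fin n} (h : (j : ℕ) = i + 1) :
    tridiagonal a b c n i j = b i := by
  simp only [tridiagonal, of_apply]
  split_ifs <;> first | rfl | omega

theorem tridiagonal_apply_subdiag {n : ℕ} {i j : Fin n} (h : (i : ℕ) = j + 1) :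
    tridiagonal a b c n i j = c j := by
  simp only [tridiagonal, of_apply]
  split_ifs <;> first | rfl | omega

theorem tridiagonal_apply_eq_zero {n : ℕ} {i j : Fin n} (h : (i : ℕ) + 1 < j ∨ (j : ℕ) + 1 < i) :
    tridiagonal a b c n i j = 0 := by
  simp only [tridiagonal, of_apply]
  split_ifs <;> first | rfl | omega

theorem det_tridiagonal_succ_succ (n : ℕ) :
    (tridiagonal a b c (n + 2)).det =
      a (n + 1) * (tridiagonal a b c (n + 1)).det - b n * c n * (tridiagonal a b c n).det := by
  have hcol : (Fin.last n).castSucc.succAbove ∘ Fin.castSucc = Fin.castSucc ∘ Fin.castSucc :=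
    funext fun i => Fin.succAbove_castSucc_of_lt _ _ (Fin.castSucc_lt_last i)
  have hminor : ((tridiagonal a b c (n + 2)).submatrix Fin.castSucc
      (Fin.last n).castSucc.succAbove).det = b n * (tridiagonal a b c n).det := by
    rw [det_succ_of_col_last_eq_zero, submatrix_apply, Fin.succAbove_castSucc_self,
      tridiagonal_apply_superdiag a b c (by simp), submatrix_submatrix, hcol,
      ← submatrix_submatrix, tridiagonal_submatrix_castSucc, tridiagonal_submatrix_castSucc]
    · rfl
    · exact fun i => tridiagonal_apply_eq_zero a b c (Or.inl (by simp))
  rw [det_succ_row _ (Fin.last (n + 1)), Fin.sum_univ_castSucc, Fin.sum_univ_castSucc,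
    Finset.sum_eq_zero fun j _ => ?_, zero_add, Fin.succAbove_last, hminor,
    tridiagonal_submatrix_castSucc, tridiagonal_apply_self,
    tridiagonal_apply_subdiag a b c (by simp)]
  · simp only [Fin.val_last, Fin.val_castSucc]
    rw [Odd.neg_one_pow ⟨n, by ring⟩, Even.neg_one_pow ⟨n + 1, rfl⟩]
    ring
  · rw [tridiagonal_apply_eq_zero a b c (Or.inr (by simp)), mul_zero, zero_mul]

theorem det_tridiagonal : ∀ n, (tridiagonal a b c n).det = continuant a b c n
  | 0 => det_fin_zero
  | 1 => by simp [tridiagonal, continuant]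
  | n + 2 => by
    rw [det_tridiagonal_succ_succ, det_tridiagonal (n + 1), det_tridiagonal n, continuant]

end Matrix

open Matrix

theorem continuant_succ_eq_constraintPt (N : ℕ) (ε Δ x : ℝ) : ∀ m : ℕ,
    continuant (fun i : ℕ => (i : ℝ) ^ 2 - i * x - 2 * ε * i - Δ ^ 2) (fun i : ℕ => (i : ℝ) * x)
        (fun j : ℕ => ((j : ℝ) + 1) * (N - j)) (m + 1) =
      (-1) ^ (m + 1) * Δ ^ 2 * constraintPt N ε Δ x m
  | 0 => by simp [continuant, constraintPt]
  | 1 => by simp [continuant, constraintPt]; ring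
  | m + 2 => by
    rw [continuant, continuant_succ_eq_constraintPt N ε Δ x (m + 1),
      continuant_succ_eq_constraintPt N ε Δ x m, constraintPt]
    push_cast
    ring

theorem det_tridiagMt_general (N k : ℕ) (x Δ ε : ℝ) :
    (tridiagMt N k ε Δ x).det = (-1) ^ (k + 1) * Δ ^ 2 * constraintPt N ε Δ x k := by
  rw [← continuant_succ_eq_constraintPt, ← det_tridiagonal]
  rfl

/-- `det M̃^{(N,ε)}_k(x,Δ) = (−1)^{k+1}·Δ²·P̃^{(N,ε)}_k(x)` for `0 ≤ k ≤ N`. -/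
theorem det_tridiagMt (N k : ℕ) (hk : k ≤ N) (x Δ ε : ℝ) :
    (tridiagMt N k ε Δ x).det = (-1) ^ (k + 1) * Δ ^ 2 * constraintPt N ε Δ x k :=
  det_tridiagMt_general N k x Δ ε
end

section
/- Let N ≥ 1 be a natural number, ε and Δ real numbers, and let x > 0 be a real root of the constraint polynomial, i.e. P^{(N,ε)}_N(x) = 0. Then the (N+1)×(N+1) real tridiagonal matrix M^{(N,ε)}_N(x,Δ) has rank exactly N. -/
/-- The `(k+1)×(k+1)` tridiagonal matrix `M^{(N,ε)}_k(x,Δ)`: diagonal entries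
`i² − i·x + 2εi − Δ²`, superdiagonal entries `(i+1)·x`, subdiagonal entries
`M[i+1][i] = i·(N−i)`, all other entries `0`. -/
noncomputable def tridiagM (N k : ℕ) (ε Δ x : ℝ) : Matrix (Fin (k + 1)) (Fin (k + 1)) ℝ :=
  Matrix.of fun i j =>
    if (i : ℕ) = (j : ℕ) then (i : ℝ) ^ 2 - (i : ℝ) * x + 2 * ε * (i : ℝ) - Δ ^ 2
    else if (j : ℕ) = (i : ℕ) + 1 then ((i : ℝ) + 1) * x
    else if (i : ℕ) = (j : ℕ) + 1 then (j : ℝ) * ((N : ℝ) - (j : ℝ))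
    else 0

namespace Matrix

variable {R : Type*} [CommRing R]

theorem rank_lt_card_of_det_eq_zero {K : Type*} [Field K] {n : Type*} [Fintype n] [DecidableEq n]
    {A : Matrix n n K} (h : A.det = 0) : A.rank < Fintype.card n := by
  obtain ⟨v, hv, hAv⟩ := exists_mulVec_eq_zero_iff.mpr h
  have hker : 0 < Module.finrank K (LinearMap.ker A.mulVecLin) :=
    Module.finrank_pos_iff_exists_ne_zero.mpr ⟨⟨v, hAv⟩, fun h => hv (congrArg Subtype.val h)⟩
  have hrank_nullity := LinearMap.finrank_range_add_finrank_ker A.mulVecLin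
  rw [Module.finrank_fintype_fun_eq_card] at hrank_nullity
  rw [rank]
  omega

theorem card_le_rank_of_det_submatrix_ne_zero [IsDomain R] {m n k : Type*} [Fintype n] [Fintype k]
    [DecidableEq k] (A : Matrix m n R) (r : k → m) (c : k → n) (h : (A.submatrix r c).det ≠ 0) :
    Fintype.card k ≤ A.rank :=
  rank_of_det_ne_zero h ▸ rank_submatrix_le A r c

theorem det_succ_succ_of_tridiagonal {n : ℕ} (A : Matrix (Fin (n + 2)) (Fin (n + 2)) R)
    (hrow : ∀ j : Fin n, A (Fin.last _) j.castSucc.castSucc = 0)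
    (hcol : ∀ i : Fin n, A i.castSucc.castSucc (Fin.last _) = 0) :
    A.det = A (Fin.last _) (Fin.last _) * (A.submatrix Fin.castSucc Fin.castSucc).det
      - A (Fin.last _) (Fin.last n).castSucc * A (Fin.last n).castSucc (Fin.last _) *
        (A.submatrix (Fin.castSucc ∘ Fin.castSucc) (Fin.castSucc ∘ Fin.castSucc)).det := by
  set B := A.submatrix Fin.castSucc (Fin.last n).castSucc.succAbove
  have hB : B.det = A (Fin.last n).castSucc (Fin.last _) *
      (A.submatrix (Fin.castSucc ∘ Fin.castSucc) (Fin.castSucc ∘ Fin.castSucc)).det := by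
    rw [det_succ_column B (Fin.last n), Fin.sum_univ_castSucc]
    have hlast : (Fin.last n).castSucc.succAbove (Fin.last n) = Fin.last (n + 1) := by
      rw [Fin.succAbove_castSucc_self, Fin.succ_last]
    have hminor : B.submatrix Fin.castSucc Fin.castSucc =
        A.submatrix (Fin.castSucc ∘ Fin.castSucc) (Fin.castSucc ∘ Fin.castSucc) := by
      ext i j
      simp [B, Fin.succAbove_castSucc_of_lt _ _ (Fin.castSucc_lt_last j)]
    simp only [B, submatrix_apply, hlast, hcol, mul_zero, zero_mul, Finset.sum_const_zero,
      zero_add, Fin.succAbove_last]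
    rw [← hminor, Fin.val_last, ← two_mul, pow_mul, neg_one_sq, one_pow, one_mul]
  rw [det_succ_row A (Fin.last _), Fin.sum_univ_castSucc, Fin.sum_univ_castSucc]
  simp only [hrow, mul_zero, zero_mul, Finset.sum_const_zero, zero_add, Fin.succAbove_last]
  rw [hB, Fin.val_last, Fin.val_castSucc, Fin.val_last, ← two_mul, pow_mul, neg_one_sq, one_pow,
    show n + 1 + n = 2 * n + 1 by ring, pow_succ, pow_mul, neg_one_sq, one_pow]
  ring

end Matrix

section tridiagM

variable (N : ℕ) (ε Δ x : ℝ)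

theorem tridiagM_apply_self {k : ℕ} (i : Fin (k + 1)) :
    tridiagM N k ε Δ x i i = (i : ℝ) ^ 2 - (i : ℝ) * x + 2 * ε * (i : ℝ) - Δ ^ 2 :=
  if_pos rfl

theorem tridiagM_apply_castSucc_succ {k : ℕ} (i : Fin k) :
    tridiagM N k ε Δ x i.castSucc i.succ = ((i : ℝ) + 1) * x := by
  rw [tridiagM, Matrix.of_apply, Fin.val_castSucc, Fin.val_succ, if_neg (by omega), if_pos rfl]

theorem tridiagM_apply_succ_castSucc {k : ℕ} (i : Fin k) :
    tridiagM N k ε Δ x i.succ i.castSucc = (i : ℝ) * ((N : ℝ) - (i : ℝ)) := by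
  rw [tridiagM, Matrix.of_apply, Fin.val_succ, Fin.val_castSucc, if_neg (by omega),
    if_neg (by omega), if_pos rfl]

theorem tridiagM_apply_of_not_adjacent {k : ℕ} {i j : Fin (k + 1)}
    (h : (j : ℕ) + 1 < i ∨ (i : ℕ) + 1 < j) : tridiagM N k ε Δ x i j = 0 := by
  rw [tridiagM, Matrix.of_apply, if_neg (by omega), if_neg (by omega), if_neg (by omega)]

theorem tridiagM_submatrix_castSucc (k : ℕ) :
    (tridiagM N (k + 1) ε Δ x).submatrix Fin.castSucc Fin.castSucc = tridiagM N k ε Δ x :=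
  rfl

theorem det_tridiagM : ∀ k : ℕ,
    (tridiagM N k ε Δ x).det = (-1) ^ (k + 1) * Δ ^ 2 * constraintP N ε Δ x k
  | 0 => by simp [tridiagM, constraintP]
  | 1 => by
    rw [Matrix.det_fin_two, ← Fin.succ_zero_eq_one, ← Fin.castSucc_zero, tridiagM_apply_self,
      tridiagM_apply_self, tridiagM_apply_succ_castSucc, tridiagM_apply_castSucc_succ, constraintP]
    simp only [Fin.val_castSucc, Fin.val_succ, Fin.val_zero, Nat.cast_zero, zero_add, Nat.cast_one]
    ring
  | k + 2 => by
    rw [Matrix.det_succ_succ_of_tridiagonal _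
        (fun j => tridiagM_apply_of_not_adjacent _ _ _ _ (Or.inl (by simpa using j.is_le)))
        (fun i => tridiagM_apply_of_not_adjacent _ _ _ _ (Or.inr (by simpa using i.is_le))),
      ← Matrix.submatrix_submatrix, tridiagM_submatrix_castSucc, tridiagM_submatrix_castSucc,
      det_tridiagM (k + 1), det_tridiagM k, tridiagM_apply_self, ← Fin.succ_last,
      tridiagM_apply_succ_castSucc, tridiagM_apply_castSucc_succ, constraintP]
    simp only [Fin.val_succ, Fin.val_last]
    push_cast
    ring

theorem det_tridiagM_submatrix_castSucc_succ (k : ℕ) :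
    ((tridiagM N k ε Δ x).submatrix Fin.castSucc Fin.succ).det =
      ∏ i : Fin k, ((i : ℝ) + 1) * x := by
  rw [Matrix.det_of_isLowerTriangular]
  · simp only [Matrix.submatrix_apply, tridiagM_apply_castSucc_succ]
  · intro i j (hij : i < j)
    exact tridiagM_apply_of_not_adjacent _ _ _ _ (Or.inr (by simpa using hij))

end tridiagM

theorem rank_tridiagM_general (N : ℕ) (ε Δ : ℝ) (x : ℝ) (hx : 0 < x)
    (hroot : constraintP N ε Δ x N = 0) :
    (tridiagM N N ε Δ x).rank = N := by
  apply le_antisymm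
  · have hdet : (tridiagM N N ε Δ x).det = 0 := by rw [det_tridiagM, hroot, mul_zero]
    simpa [Nat.lt_succ_iff] using Matrix.rank_lt_card_of_det_eq_zero hdet
  · have hminor : ((tridiagM N N ε Δ x).submatrix Fin.castSucc Fin.succ).det ≠ 0 := by
      rw [det_tridiagM_submatrix_castSucc_succ]
      exact Finset.prod_ne_zero_iff.mpr fun i _ => by positivity
    simpa using Matrix.card_le_rank_of_det_submatrix_ne_zero _ _ _ hminor

/-- If `x > 0` is a root of `P^{(N,ε)}_N`, then `M^{(N,ε)}_N(x,Δ)` has rank exactly `N`. -/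
theorem rank_tridiagM (N : ℕ) (hN : 1 ≤ N) (ε Δ : ℝ) (x : ℝ) (hx : 0 < x)
    (hroot : constraintP N ε Δ x N = 0) :
    (tridiagM N N ε Δ x).rank = N :=
  rank_tridiagM_general N ε Δ x hx hroot
end
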